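/- arXiv:1712.02676 — 5 statements merged into one kernel-verified Lean document; each statement's English description precedes it below -/
import Mathlib

section
/- Let G be an r-regular graph on n vertices where r is odd and n ≡ 2 (mod 4). Then there does not exist an orientation of G together with a bijection l : V(G) → Z_n such that for every vertex x, the sum of l(y) over out-neighbors y of x minus the sum of l(y) over in-neighbors y of x equals a fixed constant μ ∈ Z_n. -/
open Finset

/-- An orientation of `G` together with a bijective labeling by `ZMod n` whose
vertex weights (sum of labels of out-neighbors minus sum of labels of in-neighbors)
are all equal to some constant `μ`. -/
def orientableDistanceMagic {V : Type*} [Fintype V] [DecidableEq V]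
    (G : SimpleGraph V) (n : ℕ) : Prop :=
  ∃ (D : V → V → Bool) (l : V → ZMod n) (μ : ZMod n),
    Function.Bijective l ∧
    (∀ x y, D x y → G.Adj x y) ∧
    (∀ x y, G.Adj x y → (D x y ↔ ¬ D y x)) ∧
    ∀ x : V, (∑ y ∈ univ.filter (fun y => D x y), l y)
           - (∑ y ∈ univ.filter (fun y => D y x), l y) = μ

/-!
Modulo 2, subtracting an in-neighbour's label is the same as adding it, so every weight reduces
to the sum of the labels of all neighbours. Summing over the vertices counts each label `r`
times, so the total is `r · ∑_{i<n} i ≡ 1` because `r` is odd and `n ≡ 2 (mod 4)`; but it is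
also `n · μ ≡ 0` because `n` is even.
-/

theorem sum_range_two_mul_natCast_zmod_two (m : ℕ) :
    ∑ i ∈ range (2 * m), (i : ZMod 2) = m := by
  induction m with
  | zero => simp
  | succ m ih =>
    rw [show 2 * (m + 1) = 2 * m + 1 + 1 by ring, sum_range_succ, sum_range_succ, ih]
    push_cast
    rw [show (2 : ZMod 2) = 0 from rfl]
    ring

theorem sum_val_zmod_two_eq_one {n : ℕ} [NeZero n] (hn : n % 4 = 2) :
    ∑ z : ZMod n, ((z.val : ℕ) : ZMod 2) = 1 := by
  obtain ⟨k, rfl⟩ : ∃ k, n = 4 * k + 1 + 1 := ⟨n / 4, by omega⟩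
  rw [ZMod.val]
  refine (Fin.sum_univ_eq_sum_range (fun i => (i : ZMod 2)) _).trans ?_
  rw [show 4 * k + 1 + 1 = 2 * (2 * k + 1) by ring, sum_range_two_mul_natCast_zmod_two,
    ZMod.natCast_eq_one_iff_odd]
  exact odd_two_mul_add_one k

namespace SimpleGraph

variable {V : Type*} [Fintype V] (G : SimpleGraph V) [DecidableRel G.Adj]

theorem sum_sum_neighborFinset_of_isRegularOfDegree {M : Type*} [AddCommMonoid M] {r : ℕ}
    (hreg : G.IsRegularOfDegree r) (f : V → M) :
    ∑ x, ∑ y ∈ G.neighborFinset x, f y = r • ∑ y, f y := by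
  rw [sum_comm' (t' := univ) (s' := fun y => G.neighborFinset y)
    fun x y => by simp [G.adj_comm]]
  simp_rw [sum_const, card_neighborFinset_eq_degree, hreg.degree_eq, smul_sum]

theorem sum_neighborFinset_eq_add_of_orientation [DecidableEq V] {M : Type*} [AddCommMonoid M]
    {D : V → V → Bool} (hDadj : ∀ x y, D x y → G.Adj x y)
    (hDanti : ∀ x y, G.Adj x y → (D x y ↔ ¬ D y x)) (f : V → M) (x : V) :
    ∑ y ∈ G.neighborFinset x, f y
      = ∑ y ∈ univ.filter (fun y => D x y), f y + ∑ y ∈ univ.filter (fun y => D y x), f y := by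
  rw [← sum_union]
  · congr 1
    ext y
    simp only [mem_neighborFinset, mem_union, mem_filter, mem_univ, true_and]
    refine ⟨fun h => ?_, ?_⟩
    · by_contra! hxy
      exact absurd ((hDanti x y h).2 (by simp [hxy.2])) (by simp [hxy.1])
    · rintro (h | h)
      exacts [hDadj x y h, (hDadj y x h).symm]
  · rw [disjoint_filter]
    exact fun y _ hxy hyx => (hDanti x y (hDadj x y hxy)).1 hxy hyx

end SimpleGraph

theorem stmt_0_general {V : Type*} [Fintype V] [DecidableEq V] (G : SimpleGraph V)
    [DecidableRel G.Adj] (n r : ℕ)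
    (hreg : G.IsRegularOfDegree r) (hr : Odd r) (hn : n % 4 = 2) :
    ¬ orientableDistanceMagic G n := by
  rintro ⟨D, l, μ, hbij, hDadj, hDanti, hw⟩
  have : NeZero n := ⟨by omega⟩
  let φ : ZMod n →+* ZMod 2 := ZMod.castHom (by omega : 2 ∣ n) (ZMod 2)
  have hweight : ∀ x, ∑ y ∈ G.neighborFinset x, φ (l y) = φ μ := fun x => by
    rw [G.sum_neighborFinset_eq_add_of_orientation hDadj hDanti, ← CharTwo.sub_eq_add,
      ← map_sum, ← map_sum, ← map_sub, hw]
  have hlabels : ∑ y, φ (l y) = 1 := by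
    rw [Fintype.sum_bijective l hbij _ _ fun _ => rfl, ← sum_val_zmod_two_eq_one hn]
    simp only [φ, ZMod.castHom_apply, ZMod.cast_eq_val]
  have hcard : Fintype.card V = n := (Fintype.card_of_bijective hbij).trans (ZMod.card n)
  have hn2 : (n : ZMod 2) = 0 := (ZMod.natCast_eq_zero_iff_even).2 (Nat.even_iff.2 (by omega))
  refine one_ne_zero (α := ZMod 2) ?_
  calc (1 : ZMod 2) = r • ∑ y, φ (l y) := by
        rw [hlabels, nsmul_eq_mul, hr.natCast_zmod_two, mul_one]
    _ = ∑ x, ∑ y ∈ G.neighborFinset x, φ (l y) :=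
      (G.sum_sum_neighborFinset_of_isRegularOfDegree hreg _).symm
    _ = ∑ _x : V, φ μ := sum_congr rfl fun x _ => hweight x
    _ = 0 := by rw [sum_const, card_univ, hcard, nsmul_eq_mul, hn2, zero_mul]

theorem stmt_0 {V : Type*} [Fintype V] [DecidableEq V] (G : SimpleGraph V)
    [DecidableRel G.Adj] (n r : ℕ) (hcard : Fintype.card V = n)
    (hreg : G.IsRegularOfDegree r) (hr : Odd r) (hn : n % 4 = 2) :
    ¬ orientableDistanceMagic G n :=
  stmt_0_general G n r hreg hr hn
end

section
/- The complete graph K_n is orientable Z_n-distance magic if and only if n is odd. -/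
/-!
In any orientation of `K_n` with labels `l`, the out-sum and the in-sum at `x` add up to
`S - l x`, where `S` is the sum of all labels. A magic constant `μ` therefore forces
`2 · (out-sum at x) = μ + S - l x`, and choosing `x` with `l x = μ + S - 1` shows that `2` is a
unit of `ℤ/n`, i.e. `n` is odd.

Conversely, for `n = 2m + 1` label `ℤ/n` by itself and orient `x → y` iff `y - x ∈ {1, …, m}`.
This is a tournament, and as a Cayley digraph its out-sum at `x` is `m x + c` and its in-sum is
`m x - c` with `c = 1 + ⋯ + m`, so every weight equals `2c`.
-/

open Finset

theorem sum_out_add_sum_in_eq_sum_sub {V R : Type*} [Fintype V] [DecidableEq V] [AddCommGroup R]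
    {D : V → V → Bool} (hloop : ∀ x, ¬ D x x) (htour : ∀ x y, x ≠ y → (D x y ↔ ¬ D y x))
    (l : V → R) (x : V) :
    (∑ y ∈ univ.filter (fun y => D x y), l y) + ∑ y ∈ univ.filter (fun y => D y x), l y
      = (∑ y, l y) - l x := by
  have hsplit : ∀ y, (if D x y then l y else 0) + (if D y x then l y else 0)
      = l y - if x = y then l y else 0 := by
    intro y
    by_cases hxy : x = y
    · subst hxy; simp [hloop]
    · by_cases hD : D x y
      · simp [hD, hxy, (htour x y hxy).1 hD]
      · simp [hD, hxy, (htour y x (Ne.symm hxy)).2 hD]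
  simp only [sum_filter, ← sum_add_distrib, hsplit, sum_sub_distrib, sum_ite_eq, mem_univ,
    if_true]

theorem isUnit_two_of_orientableDistanceMagic_top {V : Type*} [Fintype V] [DecidableEq V]
    {n : ℕ} (h : orientableDistanceMagic (⊤ : SimpleGraph V) n) : IsUnit (2 : ZMod n) := by
  obtain ⟨D, l, μ, ⟨-, hl⟩, hadj, htour, hweight⟩ := h
  have hloop : ∀ x, ¬ D x x := fun x hx => (hadj x x hx).ne rfl
  obtain ⟨x, hx⟩ := hl (μ + ∑ y, l y - 1)
  refine IsUnit.of_mul_eq_one (∑ y ∈ univ.filter (fun y => D x y), l y) ?_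
  linear_combination sum_out_add_sum_in_eq_sum_sub hloop htour l x + hweight x - hx

section Cayley

variable {A : Type*} [AddCommGroup A] [Fintype A] [DecidableEq A]

theorem sum_filter_subRight_mem (T : Finset A) (x : A) :
    ∑ y ∈ univ.filter (fun y => y - x ∈ T), y = #T • x + ∑ w ∈ T, w := by
  rw [sum_filter, ← Equiv.sum_comp (Equiv.addLeft x)]
  simp only [Equiv.coe_addLeft, add_sub_cancel_left, sum_ite_mem, univ_inter]
  rw [sum_add_distrib, sum_const]

theorem sum_filter_subLeft_mem (T : Finset A) (x : A) :
    ∑ y ∈ univ.filter (fun y => x - y ∈ T), y = #T • x - ∑ w ∈ T, w := by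
  rw [sum_filter, ← Equiv.sum_comp (Equiv.subLeft x)]
  simp only [Equiv.subLeft_apply, sub_sub_cancel, sum_ite_mem, univ_inter]
  rw [sum_sub_distrib, sum_const]

end Cayley

theorem orientableDistanceMagic_top_of_equiv {V W : Type*} [Fintype V] [DecidableEq V]
    [Fintype W] [DecidableEq W] (e : V ≃ W) {n : ℕ}
    (h : orientableDistanceMagic (⊤ : SimpleGraph W) n) :
    orientableDistanceMagic (⊤ : SimpleGraph V) n := by
  obtain ⟨D, l, μ, hl, hadj, htour, hweight⟩ := h
  refine ⟨fun x y => D (e x) (e y), l ∘ e, μ, hl.comp e.bijective, fun x y hxy => ?_,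
    fun x y hxy => htour _ _ (by simpa using hxy), fun x => ?_⟩
  · simpa using (hadj _ _ hxy).ne
  · simpa only [sum_filter, Function.comp_apply,
      Equiv.sum_comp e (fun z => if D (e x) z then l z else 0),
      Equiv.sum_comp e (fun z => if D z (e x) then l z else 0)] using hweight (e x)

def lowerHalf (m : ℕ) : Finset (ZMod (2 * m + 1)) :=
  univ.filter (fun w => 1 ≤ w.val ∧ w.val ≤ m)

theorem zero_notMem_lowerHalf (m : ℕ) : (0 : ZMod (2 * m + 1)) ∉ lowerHalf m := by
  simp [lowerHalf]

theorem mem_lowerHalf_iff_neg_notMem {m : ℕ} {w : ZMod (2 * m + 1)} (hw : w ≠ 0) :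
    w ∈ lowerHalf m ↔ -w ∉ lowerHalf m := by
  have hpos : 0 < w.val := ZMod.val_pos.2 hw
  have hlt : w.val < 2 * m + 1 := ZMod.val_lt w
  simp only [lowerHalf, mem_filter, mem_univ, true_and, ZMod.neg_val, if_neg hw]
  omega

theorem orientableDistanceMagic_top_zmod (m : ℕ) :
    orientableDistanceMagic (⊤ : SimpleGraph (ZMod (2 * m + 1))) (2 * m + 1) := by
  refine ⟨fun x y => decide (y - x ∈ lowerHalf m), id, 2 • ∑ w ∈ lowerHalf m, w,
    Function.bijective_id, fun x y hxy => ?_, fun x y hxy => ?_, fun x => ?_⟩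
  · rintro rfl
    simp [zero_notMem_lowerHalf] at hxy
  · rw [decide_eq_true_iff, decide_eq_true_iff, ← neg_sub y x]
    exact mem_lowerHalf_iff_neg_notMem (sub_ne_zero.2 (Ne.symm hxy))
  · simp only [decide_eq_true_eq, id, sum_filter_subRight_mem, sum_filter_subLeft_mem]
    abel

theorem stmt_1_general (n : ℕ) :
    orientableDistanceMagic (⊤ : SimpleGraph (Fin n)) n ↔ Odd n := by
  constructor
  · intro h
    have h2 : IsUnit ((2 : ℕ) : ZMod n) := mod_cast isUnit_two_of_orientableDistanceMagic_top h
    rwa [ZMod.isUnit_iff_coprime, Nat.coprime_two_left] at h2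
  · rintro ⟨m, rfl⟩
    exact orientableDistanceMagic_top_of_equiv (ZMod.finEquiv _).toEquiv
      (orientableDistanceMagic_top_zmod m)

theorem stmt_1 (n : ℕ) (hn : 1 ≤ n) :
    orientableDistanceMagic (⊤ : SimpleGraph (Fin n)) n ↔ Odd n :=
  stmt_1_general n
end

section
/- Let n be a positive even integer and let n = r_1 + r_2 + ... + r_q be a partition with each r_i ≥ 2. Let A = {−n/2, −(n/2−1), ..., −1, 1, ..., n/2−1, n/2} ⊆ ℤ. Then A can be partitioned into pairwise disjoint subsets A_1, ..., A_q with |A_i| = r_i and Σ_{a∈A_i} a = 0 for every i. -/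
/-!
Write each part size as `r = 2 p + 3 b` with `b ∈ {0, 1}`. Since `n` is even, the number `2 t` of
odd parts is even, and `±{1, …, 3t}` splits into `2 t` zero-sum triples. Every odd part takes one
of these triples, and every part takes its `p` pairs `{x, -x}` with `3 t < x ≤ n / 2` from a
block of consecutive values of `x`. The parts are disjoint, lie in `A`, and their sizes add up
to `n = |A|`, so they exhaust `A`.
-/

open Finset Function

open scoped Pointwise

noncomputable def pairBlock (c p : ℕ) : Finset ℤ := Ioc (c : ℤ) (c + p) ∪ -Ioc (c : ℤ) (c + p)

lemma mem_pairBlock {c p : ℕ} {x : ℤ} : x ∈ pairBlock c p ↔ c < |x| ∧ |x| ≤ c + p := by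
  rw [pairBlock, mem_union, mem_neg', mem_Ioc, mem_Ioc]
  rcases abs_cases x with ⟨h, _⟩ | ⟨h, _⟩ <;> rw [h] <;> omega

lemma disjoint_Ioc_neg_Ioc {a : ℤ} (ha : 0 ≤ a) (b : ℤ) : Disjoint (Ioc a b) (-Ioc a b) := by
  rw [disjoint_left]
  intro x hx hx'
  rw [mem_neg', mem_Ioc] at hx'
  rw [mem_Ioc] at hx
  omega

lemma card_pairBlock (c p : ℕ) : #(pairBlock c p) = 2 * p := by
  rw [pairBlock, card_union_of_disjoint (disjoint_Ioc_neg_Ioc c.cast_nonneg _), card_neg,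
    Int.card_Ioc]
  omega

lemma sum_pairBlock (c p : ℕ) : ∑ x ∈ pairBlock c p, x = 0 := by
  rw [pairBlock, sum_union (disjoint_Ioc_neg_Ioc c.cast_nonneg _), sum_neg_index,
    sum_neg_distrib, add_neg_cancel]

/-- For `i < t`, the triples `j = 2 i` and `j = 2 i + 1` are `{i+1, t+i+1, -(t+2i+2)}` and
`{2t+i+1, -(t-i), -(t+2i+1)}`; over all `i` their positive entries are `1, …, 3t` and their
negative entries are `-1, …, -t` together with the negatives of the even and the odd numbers in
`t+1, …, 3t`. -/
def triple (t j : ℕ) : Finset ℤ :=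
  let i : ℤ := (j / 2 : ℕ)
  if j % 2 = 0 then {i + 1, t + i + 1, -(t + 2 * i + 2)}
  else {2 * t + i + 1, -(t - i), -(t + 2 * i + 1)}

section Triples

variable {t j j' : ℕ}

lemma ne_zero_and_abs_le_of_mem_triple (hj : j < 2 * t) {x : ℤ} (hx : x ∈ triple t j) :
    x ≠ 0 ∧ |x| ≤ 3 * t := by
  unfold triple at hx
  split_ifs at hx <;> simp only [mem_insert, mem_singleton] at hx <;>
    rcases hx with rfl | rfl | rfl <;> constructor <;> (try rw [abs_le]) <;> omega

lemma eq_of_mem_triple (hj : j < 2 * t) (hj' : j' < 2 * t) {x : ℤ}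
    (hx : x ∈ triple t j) (hx' : x ∈ triple t j') : j = j' := by
  unfold triple at hx hx'
  split_ifs at hx hx' <;> simp only [mem_insert, mem_singleton] at hx hx' <;> omega

lemma card_triple (hj : j < 2 * t) : #(triple t j) = 3 := by
  unfold triple
  split_ifs <;> rw [card_insert_of_notMem (by simp; omega),
      card_insert_of_notMem (by simp; omega), card_singleton]

lemma sum_triple (hj : j < 2 * t) : ∑ x ∈ triple t j, x = 0 := by
  unfold triple
  split_ifs <;> rw [sum_insert (by simp; omega), sum_insert (by simp; omega),
      sum_singleton] <;> ring

lemma disjoint_pairBlock_triple (hj : j < 2 * t) (c p : ℕ) :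
    Disjoint (pairBlock (3 * t + c) p) (triple t j) := by
  rw [disjoint_left]
  intro x hx hx'
  have := (ne_zero_and_abs_le_of_mem_triple hj hx').2
  rw [mem_pairBlock] at hx
  omega

end Triples

section Offsets

variable {ι M : Type*} [LinearOrder ι] [LocallyFiniteOrderBot ι]
  [AddCommMonoid M] [PartialOrder M] [CanonicallyOrderedAdd M] (g : ι → M)

lemma sum_Iio_add_le_sum_Iio {i j : ι} (h : i < j) :
    ∑ k ∈ Iio i, g k + g i ≤ ∑ k ∈ Iio j, g k := by
  rw [add_comm, ← sum_insert notMem_Iio_self, Iio_insert]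
  exact sum_le_sum_of_subset fun k hk => mem_Iio.2 ((mem_Iic.1 hk).trans_lt h)

lemma sum_Iio_add_le_sum [Fintype ι] (i : ι) : ∑ k ∈ Iio i, g k + g i ≤ ∑ k, g k := by
  rw [add_comm, ← sum_insert notMem_Iio_self]
  exact sum_le_sum_of_subset (subset_univ _)

end Offsets

def pairCount (m : ℕ) : ℕ := (m - 3 * (m % 2)) / 2

lemma two_mul_pairCount_add {m : ℕ} (hm : 2 ≤ m) : 2 * pairCount m + 3 * (m % 2) = m := by
  unfold pairCount; omega

lemma sum_eq_two_mul_sum_pairCount_add {ι : Type*} {s : Finset ι} {r : ι → ℕ}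
    (hr : ∀ i ∈ s, 2 ≤ r i) :
    ∑ i ∈ s, r i = 2 * ∑ i ∈ s, pairCount (r i) + 3 * ∑ i ∈ s, r i % 2 := by
  rw [mul_sum, mul_sum, ← sum_add_distrib]
  exact sum_congr rfl fun i hi => (two_mul_pairCount_add (hr i hi)).symm

section Parts

variable {ι : Type*} [LinearOrder ι] [LocallyFiniteOrderBot ι] (t : ℕ) (r : ι → ℕ)

noncomputable def part (i : ι) : Finset ℤ :=
  pairBlock (3 * t + ∑ k ∈ Iio i, pairCount (r k)) (pairCount (r i)) ∪
    if r i % 2 = 1 then triple t (∑ k ∈ Iio i, r k % 2) else ∅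

variable {t r}

lemma mem_part {i : ι} {x : ℤ} : x ∈ part t r i ↔
    x ∈ pairBlock (3 * t + ∑ k ∈ Iio i, pairCount (r k)) (pairCount (r i)) ∨
      r i % 2 = 1 ∧ x ∈ triple t (∑ k ∈ Iio i, r k % 2) := by
  rw [part, mem_union]
  split_ifs with h <;> simp [h]

variable [Fintype ι]

lemma triple_index_lt (ht : ∑ k, r k % 2 = 2 * t) {i : ι} (hi : r i % 2 = 1) :
    ∑ k ∈ Iio i, r k % 2 < 2 * t := by
  have := sum_Iio_add_le_sum (fun k => r k % 2) i
  omega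

lemma card_part (ht : ∑ k, r k % 2 = 2 * t) (hr : ∀ i, 2 ≤ r i) (i : ι) :
    #(part t r i) = r i := by
  have := two_mul_pairCount_add (hr i)
  rw [part, card_union_of_disjoint, card_pairBlock]
  · split_ifs with hi
    · rw [card_triple (triple_index_lt ht hi)]; omega
    · rw [card_empty]; omega
  · split_ifs with hi
    · exact disjoint_pairBlock_triple (triple_index_lt ht hi) _ _
    · exact disjoint_empty_right _

lemma sum_part (ht : ∑ k, r k % 2 = 2 * t) (i : ι) : ∑ x ∈ part t r i, x = 0 := by
  rw [part]
  split_ifs with hi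
  · have hj := triple_index_lt ht hi
    rw [sum_union (disjoint_pairBlock_triple hj _ _), sum_pairBlock, sum_triple hj, add_zero]
  · rw [union_empty, sum_pairBlock]

lemma pairwise_disjoint_part (ht : ∑ k, r k % 2 = 2 * t) : Pairwise (Disjoint on part t r) := by
  refine (pairwise_disjoint_on _).2 fun i j hij => ?_
  have hpairs := sum_Iio_add_le_sum_Iio (fun k => pairCount (r k)) hij
  have htriples := sum_Iio_add_le_sum_Iio (fun k => r k % 2) hij
  rw [disjoint_left]
  intro x hxi hxj
  rw [mem_part] at hxi hxj
  rcases hxi with hxi | ⟨hi, hxi⟩ <;> rcases hxj with hxj | ⟨hj, hxj⟩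
  · rw [mem_pairBlock] at hxi hxj
    omega
  · exact disjoint_left.1 (disjoint_pairBlock_triple (triple_index_lt ht hj) _ _) hxi hxj
  · exact disjoint_left.1 (disjoint_pairBlock_triple (triple_index_lt ht hi) _ _) hxj hxi
  · have := eq_of_mem_triple (triple_index_lt ht hi) (triple_index_lt ht hj) hxi hxj
    omega

lemma ne_zero_and_abs_le_of_mem_part (ht : ∑ k, r k % 2 = 2 * t) {i : ι} {x : ℤ}
    (hx : x ∈ part t r i) : x ≠ 0 ∧ |x| ≤ 3 * t + ∑ k, pairCount (r k) := by
  rw [mem_part] at hx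
  rcases hx with hx | ⟨hi, hx⟩
  · have := sum_Iio_add_le_sum (fun k => pairCount (r k)) i
    rw [mem_pairBlock] at hx
    exact ⟨abs_pos.1 (by omega), by omega⟩
  · have := ne_zero_and_abs_le_of_mem_triple (triple_index_lt ht hi) hx
    omega

lemma biUnion_part (ht : ∑ k, r k % 2 = 2 * t) (hr : ∀ i, 2 ≤ r i) {N : ℕ}
    (hN : 3 * t + ∑ k, pairCount (r k) = N) :
    univ.biUnion (part t r) = (Icc (-N : ℤ) N).erase 0 := by
  subst hN
  apply eq_of_subset_of_card_le
  · intro x hx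
    obtain ⟨i, -, hx⟩ := mem_biUnion.1 hx
    obtain ⟨hx0, hxN⟩ := ne_zero_and_abs_le_of_mem_part ht hx
    exact mem_erase.2 ⟨hx0, mem_Icc.2 (abs_le.1 (by exact_mod_cast hxN))⟩
  · have hcard : ∑ i, #(part t r i) = ∑ i, r i := sum_congr rfl fun i _ => card_part ht hr i
    have hdecomp := sum_eq_two_mul_sum_pairCount_add fun i (_ : i ∈ univ) => hr i
    rw [card_biUnion fun i _ j _ hij => pairwise_disjoint_part ht hij, hcard,
      card_erase_of_mem (mem_Icc.2 (by omega)), Int.card_Icc]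
    omega

end Parts

theorem stmt_2_general (n q : ℕ) (hne : Even n) (r : Fin q → ℕ)
    (hr : ∀ i, 2 ≤ r i) (hsum : ∑ i, r i = n) :
    ∃ A : Fin q → Finset ℤ,
      (∀ i j, i ≠ j → Disjoint (A i) (A j)) ∧
      (Finset.univ.biUnion A = (Finset.Icc (-((n : ℤ) / 2)) ((n : ℤ) / 2)).erase 0) ∧
      (∀ i, (A i).card = r i) ∧
      (∀ i, ∑ a ∈ A i, a = 0) := by
  have hdecomp := sum_eq_two_mul_sum_pairCount_add fun i (_ : i ∈ univ) => hr i
  obtain ⟨t, ht⟩ : ∃ t, ∑ i, r i % 2 = 2 * t := by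
    obtain ⟨m, hm⟩ := hne
    exact ⟨(∑ i, r i % 2) / 2, by omega⟩
  have hhalf : (n : ℤ) / 2 = (3 * t + ∑ i, pairCount (r i) : ℕ) := by omega
  refine ⟨part t r, fun i j hij => pairwise_disjoint_part ht hij, ?_, card_part ht hr,
    sum_part ht⟩
  rw [hhalf, biUnion_part ht hr rfl]

theorem stmt_2 (n q : ℕ) (hn : 0 < n) (hne : Even n) (r : Fin q → ℕ)
    (hr : ∀ i, 2 ≤ r i) (hsum : ∑ i, r i = n) :
    ∃ A : Fin q → Finset ℤ,
      (∀ i j, i ≠ j → Disjoint (A i) (A j)) ∧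
      (Finset.univ.biUnion A = (Finset.Icc (-((n : ℤ) / 2)) ((n : ℤ) / 2)).erase 0) ∧
      (∀ i, (A i).card = r i) ∧
      (∀ i, ∑ a ∈ A i, a = 0) :=
  stmt_2_general n q hne r hr hsum
end

section
/- Let m ≡ 1 (mod 4) and n ≡ 2 (mod 4). Then the complete multipartite graph K_{n,...,n} with m equal parts of size n (i.e., K_m ∘ complement(K_n)) is orientable Z_{mn}-distance magic, with magic constant μ ≡ ((m−1)/2)·((m+1)/2)·n² (mod mn). -/
open Finset

/-- The lexicographic product `K_m ∘ complement(K_n)`, i.e. the complete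
`m`-partite graph with all parts of size `n`. -/
def KmKnbar (m n : ℕ) : SimpleGraph (Fin m × Fin n) where
  Adj a b := a.1 ≠ b.1
  symm := ⟨fun _ _ h => Ne.symm h⟩
  loopless := ⟨fun _ h => h rfl⟩

instance (m n : ℕ) : DecidableRel (KmKnbar m n).Adj :=
  fun a b => inferInstanceAs (Decidable (a.1 ≠ b.1))

/-!
Orient the parts as the rotational tournament on `ℤ/m`: part `k` points to the parts
`k + 1, …, k + t`, where `m = 2t + 1`, and label vertex `(k, i)` by `i + n k`. Since
`p ↦ n p` is an additive map `ℤ/m → ℤ/mn`, the labels of part `p` sum to `c + n² p` for a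
constant `c`, with `n² p` well defined modulo `mn`. The weight of a vertex of part `k` is
therefore `∑_{d=1}^{t} n² ((k + d) - (k - d)) = ∑_{d=1}^{t} 2 n² d = t (t + 1) n²`,
whatever `k` is.
-/

def forwardSteps (m : ℕ) : Finset (Fin m) := univ.filter fun d => d.val ∈ Icc 1 (m / 2)

section Circulant

variable {m : ℕ} [NeZero m]

theorem zero_notMem_forwardSteps : (0 : Fin m) ∉ forwardSteps m := by
  simp [forwardSteps]

theorem neg_mem_forwardSteps_iff (hm : Odd m) {d : Fin m} (hd : d ≠ 0) :
    -d ∈ forwardSteps m ↔ d ∉ forwardSteps m := by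
  obtain ⟨t, rfl⟩ := hm
  have hd' : d.val ≠ 0 := Fin.val_ne_zero_iff.mpr hd
  simp only [forwardSteps, mem_filter, mem_univ, true_and, mem_Icc, Fin.val_neg, if_neg hd]
  omega

theorem sum_Icc_one_mul_two (t : ℕ) : (∑ j ∈ Icc 1 t, j) * 2 = t * (t + 1) := by
  have h := sum_range_id_mul_two (t + 1)
  rwa [range_eq_Ico, sum_eq_sum_Ico_succ_bot (by omega), Ico_add_one_right_eq_Icc,
    zero_add, Nat.add_sub_cancel, mul_comm (t + 1)] at h

theorem sum_val_forwardSteps_mul_two :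
    (∑ d ∈ forwardSteps m, d.val) * 2 = m / 2 * (m / 2 + 1) := by
  have hsub : Icc 1 (m / 2) ⊆ range m := fun j hj => by
    have := NeZero.pos m
    simp only [mem_Icc, mem_range] at hj ⊢
    omega
  rw [forwardSteps, sum_filter,
    Fin.sum_univ_eq_sum_range (fun j => if j ∈ Icc 1 (m / 2) then j else 0), sum_ite_mem,
    inter_eq_right.mpr hsub, sum_Icc_one_mul_two]

end Circulant

section Reindex

variable {G M : Type*} [AddCommGroup G] [Fintype G] [DecidableEq G] [AddCommMonoid M]

theorem sum_filter_sub_mem (S : Finset G) (k : G) (g : G → M) :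
    ∑ p ∈ univ.filter (fun p => p - k ∈ S), g p = ∑ d ∈ S, g (k + d) := by
  rw [sum_filter, ← univ_inter S, ← sum_ite_mem]
  exact Fintype.sum_equiv (Equiv.subRight k) _ _ fun p => by simp

theorem sum_filter_sub_left_mem (S : Finset G) (k : G) (g : G → M) :
    ∑ p ∈ univ.filter (fun p => k - p ∈ S), g p = ∑ d ∈ S, g (k - d) := by
  rw [sum_filter, ← univ_inter S, ← sum_ite_mem]
  exact Fintype.sum_equiv (Equiv.subLeft k) _ _ fun p => by simp

end Reindex

theorem sum_filter_fst {α β M : Type*} [Fintype α] [Fintype β] [AddCommMonoid M]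
    (p : α → Prop) [DecidablePred p] (f : α × β → M) :
    ∑ y ∈ univ.filter (fun y => p y.1), f y = ∑ a ∈ univ.filter p, ∑ b, f (a, b) := by
  rw [← univ_product_univ, filter_product_left, sum_product]

namespace KmKnbar

variable {m n : ℕ}

def blockOffset (m n : ℕ) [NeZero m] : Fin m →+ ZMod (m * n) where
  toFun p := (n * p.val : ℕ)
  map_zero' := by simp
  map_add' a b := by
    rw [Fin.val_add, ← Nat.mul_mod_mul_left, Nat.mul_comm n m, ZMod.natCast_mod]
    push_cast
    ring

def label (m n : ℕ) (x : Fin m × Fin n) : ZMod (m * n) := (finProdFinEquiv x : ℕ)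

theorem label_injective : Function.Injective (label m n) := by
  intro x y hxy
  have h := congrArg ZMod.val hxy
  simp only [label, ZMod.val_natCast, Nat.mod_eq_of_lt (Fin.isLt _)] at h
  exact finProdFinEquiv.injective (Fin.ext h)

theorem label_bijective [NeZero (m * n)] : Function.Bijective (label m n) := by
  rw [Fintype.bijective_iff_injective_and_card]
  exact ⟨label_injective, by simp⟩

theorem label_mk [NeZero m] (p : Fin m) (j : Fin n) :
    label m n (p, j) = j.val + blockOffset m n p := by
  simp [label, blockOffset, finProdFinEquiv_apply_val]

theorem sum_label_block [NeZero m] (p : Fin m) :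
    ∑ j : Fin n, label m n (p, j)
      = ∑ j : Fin n, (j.val : ZMod (m * n)) + n • blockOffset m n p := by
  simp [label_mk, sum_add_distrib]

def arc (m n : ℕ) (x y : Fin m × Fin n) : Bool := decide (y.1 - x.1 ∈ forwardSteps m)

theorem adj_of_arc [NeZero m] {x y : Fin m × Fin n} (h : arc m n x y) :
    (KmKnbar m n).Adj x y := by
  intro hxy
  simp [arc, hxy, zero_notMem_forwardSteps] at h

theorem arc_iff_not_arc [NeZero m] (hm : Odd m) {x y : Fin m × Fin n}
    (h : (KmKnbar m n).Adj x y) : arc m n x y ↔ ¬ arc m n y x := by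
  have hne : y.1 - x.1 ≠ 0 := sub_ne_zero.mpr (Ne.symm h)
  simp only [arc, decide_eq_true_eq, ← neg_sub y.1 x.1, neg_mem_forwardSteps_iff hm hne]
  tauto

theorem sum_out_sub_sum_in [NeZero m] (x : Fin m × Fin n) :
    (∑ y ∈ univ.filter (fun y => arc m n x y), label m n y)
      - (∑ y ∈ univ.filter (fun y => arc m n y x), label m n y)
      = ((m / 2 * (m / 2 + 1) * n ^ 2 : ℕ) : ZMod (m * n)) := by
  obtain ⟨k, _⟩ := x
  simp only [arc, decide_eq_true_eq]
  rw [sum_filter_fst (fun p => p - k ∈ forwardSteps m),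
    sum_filter_fst (fun p => k - p ∈ forwardSteps m), sum_filter_sub_mem,
    sum_filter_sub_left_mem, ← sum_sub_distrib]
  have hstep : ∀ d : Fin m,
      (∑ j : Fin n, label m n (k + d, j)) - ∑ j : Fin n, label m n (k - d, j)
        = ((2 * n ^ 2 * d.val : ℕ) : ZMod (m * n)) := by
    intro d
    have hsplit : k + d = (k - d) + (d + d) := by abel
    rw [sum_label_block, sum_label_block, hsplit, map_add, map_add]
    simp only [blockOffset, AddMonoidHom.coe_mk, ZeroHom.coe_mk, nsmul_eq_mul]
    push_cast
    ring
  rw [sum_congr rfl fun d _ => hstep d, ← Nat.cast_sum, ← mul_sum]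
  congr 1
  rw [← sum_val_forwardSteps_mul_two]
  ring

end KmKnbar

theorem stmt_4 (m n : ℕ) (hm : m % 4 = 1) (hn : n % 4 = 2) :
    ∃ (D : Fin m × Fin n → Fin m × Fin n → Bool)
      (l : Fin m × Fin n → ZMod (m * n)),
      Function.Bijective l ∧
      (∀ x y, D x y → (KmKnbar m n).Adj x y) ∧
      (∀ x y, (KmKnbar m n).Adj x y → (D x y ↔ ¬ D y x)) ∧
      ∀ x, (∑ y ∈ univ.filter (fun y => D x y), l y)
         - (∑ y ∈ univ.filter (fun y => D y x), l y)
         = ((((m - 1) / 2) * ((m + 1) / 2) * n ^ 2 : ℕ) : ZMod (m * n)) := by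
  have : NeZero m := ⟨by omega⟩
  have : NeZero (m * n) := ⟨Nat.mul_ne_zero (by omega) (by omega)⟩
  have hodd : Odd m := Nat.odd_iff.mpr (by omega)
  obtain ⟨hlo, hhi⟩ : (m - 1) / 2 = m / 2 ∧ (m + 1) / 2 = m / 2 + 1 := by omega
  rw [hlo, hhi]
  exact ⟨KmKnbar.arc m n, KmKnbar.label m n, KmKnbar.label_bijective,
    fun _ _ => KmKnbar.adj_of_arc, fun _ _ => KmKnbar.arc_iff_not_arc hodd,
    KmKnbar.sum_out_sub_sum_in⟩
end

section
/- For every n ≥ 3, the prism graph P_2 □ C_n (the Cartesian product of an edge with a cycle of length n) is not orientable Z_{2n}-distance magic. -/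
open Finset

/-!
Summing `l x` times the weight of `x` over all vertices counts every arc twice with opposite
signs, so `μ * ∑ l = μ * n = 0` in `ZMod (2 * n)`: the constant `μ` is even. Reducing modulo 2,
every vertex then has an even number of odd-labelled neighbours. On the prism, with `a j`, `b j`
the parities of the labels on the two `n`-cycles, this forces `b j = a (j + 3)` and
`a j + a (j + 2) + a (j + 4) = 0`. Hence `a` is 6-periodic and each window
`a j, a (j + 2), a (j + 4)` holds 0 or 2 odd labels, which gives `n ∣ 3 * A` for the number `A`
of odd labels on one cycle. Since `b` is a shift of `a` and half of all labels are odd,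
`n = 2 * A`; then `2 * A ∣ 3 * A` forces `A = 0`, which is absurd.
-/

theorem Fintype.sum_comp_add_right {G M : Type*} [AddGroup G] [Fintype G] [AddCommMonoid M]
    (f : G → M) (c : G) : ∑ x, f (x + c) = ∑ x, f x :=
  Equiv.sum_comp (Equiv.addRight c) f

theorem ZMod.eq_apply_zero_of_periodic_one {n : ℕ} [NeZero n] {α : Type*} {f : ZMod n → α}
    (h : Function.Periodic f 1) (j : ZMod n) : f j = f 0 := by
  have key : ∀ k : ℕ, f k = f 0 := fun k => by
    induction k with
    | zero => rw [Nat.cast_zero]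
    | succ k ih => rw [Nat.cast_add_one, h, ih]
  rw [← ZMod.natCast_zmod_val j]
  exact key _

theorem ZMod.sum_univ_two_mul (n : ℕ) [NeZero n] : ∑ v : ZMod (2 * n), v = n := by
  obtain ⟨k, rfl⟩ : ∃ k, n = k + 1 := ⟨n - 1, (Nat.sub_add_cancel NeZero.one_le).symm⟩
  have gauss : ∑ i ∈ range (2 * (k + 1)), i = 2 * (k + 1) * k + (k + 1) := by
    have := sum_range_id_mul_two (2 * (k + 1))
    rw [show 2 * (k + 1) - 1 = 2 * k + 1 by omega] at this
    nlinarith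
  calc ∑ v : ZMod (2 * (k + 1)), v
      = ∑ i ∈ range (2 * (k + 1)), (i : ZMod (2 * (k + 1))) := by
        rw [← Fin.sum_univ_eq_sum_range]
        exact sum_congr rfl fun v _ => (ZMod.natCast_zmod_val v).symm
    _ = ((k + 1 : ℕ) : ZMod (2 * (k + 1))) := by
        rw [← Nat.cast_sum, gauss, Nat.cast_add, Nat.cast_mul, ZMod.natCast_self, zero_mul,
          zero_add]

theorem ZMod.castHom_two_eq_zero_of_mul_eq_zero {n : ℕ} [NeZero n] {μ : ZMod (2 * n)}
    (h : μ * n = 0) : ZMod.castHom (dvd_mul_right 2 n) (ZMod 2) μ = 0 := by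
  rw [← ZMod.natCast_zmod_val μ, ← Nat.cast_mul, ZMod.natCast_eq_zero_iff] at h
  rw [← ZMod.natCast_zmod_val μ, map_natCast, ZMod.natCast_eq_zero_iff]
  exact Nat.dvd_of_mul_dvd_mul_right (NeZero.pos n) h

theorem ZMod.sum_val_castHom_two (n : ℕ) [NeZero n] :
    ∑ v : ZMod (2 * n), (ZMod.castHom (dvd_mul_right 2 n) (ZMod 2) v).val = n := by
  set φ := ZMod.castHom (dvd_mul_right 2 n) (ZMod 2)
  have hpair : ∀ v, (φ v).val + (φ (v + 1)).val = 1 := fun v => by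
    rw [map_add, map_one]
    generalize φ v = u
    revert u; decide
  suffices 2 * (∑ v : ZMod (2 * n), (φ v).val) = 2 * n by omega
  calc 2 * (∑ v : ZMod (2 * n), (φ v).val)
      = ∑ v : ZMod (2 * n), ((φ v).val + (φ (v + 1)).val) := by
        rw [sum_add_distrib, Fintype.sum_comp_add_right (fun v => (φ v).val)]
        ring
    _ = 2 * n := by simp only [hpair, sum_const, card_univ, ZMod.card, smul_eq_mul, mul_one]

section Orientation

variable {V : Type*} [Fintype V] {D : V → V → Bool}

theorem mul_sum_eq_zero_of_forall_weight_eq {R : Type*} [CommRing R] {l : V → R} {μ : R}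
    (hw : ∀ x, (∑ y ∈ univ.filter (fun y => D x y), l y)
      - ∑ y ∈ univ.filter (fun y => D y x), l y = μ) :
    μ * ∑ x, l x = 0 := by
  calc μ * ∑ x, l x
      = ∑ x, l x * ((∑ y ∈ univ.filter (fun y => D x y), l y)
          - ∑ y ∈ univ.filter (fun y => D y x), l y) := by
        rw [mul_sum]
        exact sum_congr rfl fun x _ => by rw [hw x, mul_comm]
    _ = (∑ x, ∑ y, if D x y then l x * l y else 0)
          - ∑ x, ∑ y, if D y x then l x * l y else 0 := by
        simp only [mul_sub, sum_sub_distrib, mul_sum, sum_filter, mul_ite, mul_zero]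
    _ = 0 := by
        rw [sub_eq_zero, sum_comm]
        refine sum_congr rfl fun x _ => sum_congr rfl fun y _ => ?_
        split_ifs <;> ring

theorem outSum_add_inSum [DecidableEq V] {M : Type*} [AddCommMonoid M] {G : SimpleGraph V}
    (hsub : ∀ x y, D x y → G.Adj x y) (hor : ∀ x y, G.Adj x y → (D x y ↔ ¬ D y x))
    (f : V → M) (x : V) [Fintype (G.neighborSet x)] :
    (∑ y ∈ univ.filter (fun y => D x y), f y) + ∑ y ∈ univ.filter (fun y => D y x), f y
      = ∑ y ∈ G.neighborFinset x, f y := by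
  rw [← sum_union]
  · congr 1
    ext y
    simp only [mem_union, mem_filter, mem_univ, true_and, SimpleGraph.mem_neighborFinset]
    refine ⟨?_, fun h => ?_⟩
    · rintro (h | h)
      · exact hsub x y h
      · exact (hsub y x h).symm
    · by_cases hxy : D x y
      · exact Or.inl hxy
      · exact Or.inr (by simpa [hxy] using (hor x y h).not)
  · rw [disjoint_filter]
    intro y _ hxy hyx
    exact (hor x y (hsub x y hxy)).mp hxy hyx

end Orientation

theorem orientableDistanceMagic.exists_bijective_neighbor_parity {V : Type*} [Fintype V]
    [DecidableEq V] {G : SimpleGraph V} [G.LocallyFinite] {n : ℕ} [NeZero n]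
    (h : orientableDistanceMagic G (2 * n)) :
    ∃ l : V → ZMod (2 * n), Function.Bijective l ∧
      ∀ x, ∑ y ∈ G.neighborFinset x, ZMod.castHom (dvd_mul_right 2 n) (ZMod 2) (l y) = 0 := by
  obtain ⟨D, l, μ, hl, hsub, hor, hw⟩ := h
  have hμ : ZMod.castHom (dvd_mul_right 2 n) (ZMod 2) μ = 0 := by
    refine ZMod.castHom_two_eq_zero_of_mul_eq_zero ?_
    rw [← ZMod.sum_univ_two_mul, ← Fintype.sum_bijective l hl _ _ fun _ => rfl]
    exact mul_sum_eq_zero_of_forall_weight_eq hw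
  refine ⟨l, hl, fun x => ?_⟩
  rw [← outSum_add_inSum hsub hor, ← CharTwo.sub_eq_add, ← map_sum, ← map_sum, ← map_sub,
    hw x, hμ]

theorem prism_sum_neighborFinset {M : Type*} [AddCommMonoid M] {k : ℕ}
    (f : Fin 2 × Fin (k + 3) → M) (i : Fin 2) (j : Fin (k + 3)) :
    ∑ y ∈ ((⊤ : SimpleGraph (Fin 2)) □ SimpleGraph.cycleGraph (k + 3)).neighborFinset (i, j), f y
      = f (i + 1, j) + (f (i, j - 1) + f (i, j + 1)) := by
  rw [SimpleGraph.neighborFinset_boxProd, sum_disjUnion, sum_product, sum_product]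
  have hne : j - 1 ≠ j + 1 := by
    simp only [ne_eq, sub_eq_iff_eq_add, add_assoc j, left_eq_add]
    exact ne_of_beq_false rfl
  have htop : (⊤ : SimpleGraph (Fin 2)).neighborFinset i = {i + 1} := by
    ext i'; fin_cases i <;> fin_cases i' <;> simp
  rw [htop, SimpleGraph.cycleGraph_neighborFinset (n := k + 1)]
  simp [sum_pair hne]

section Recurrence

variable {R : Type*} [CommRing R] {a b : R → ZMod 2}

theorem recurrence_of_prism_rows (row₀ : ∀ j, a (j - 1) + a (j + 1) + b j = 0)
    (row₁ : ∀ j, b (j - 1) + b (j + 1) + a j = 0) (j : R) :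
    a j + a (j + 2) + a (j + 4) = 0 := by
  have two : (2 : ZMod 2) = 0 := rfl
  have hb : ∀ j, b j = a (j - 1) + a (j + 1) := fun j => by
    linear_combination row₀ j - (a (j - 1) + a (j + 1)) * two
  have h := row₁ (j + 2)
  rw [hb, hb, show j + 2 - 1 - 1 = j by ring, show j + 2 - 1 + 1 = j + 2 by ring,
    show j + 2 + 1 - 1 = j + 2 by ring, show j + 2 + 1 + 1 = j + 4 by ring] at h
  linear_combination h - a (j + 2) * two

theorem eq_shift_three_of_prism_rows (row₀ : ∀ j, a (j - 1) + a (j + 1) + b j = 0)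
    (hrec : ∀ j, a j + a (j + 2) + a (j + 4) = 0) (j : R) : b j = a (j + 3) := by
  have h := hrec (j - 1)
  rw [show j - 1 + 2 = j + 1 by ring, show j - 1 + 4 = j + 3 by ring] at h
  linear_combination row₀ j - h

theorem periodic_six_of_recurrence (hrec : ∀ j, a j + a (j + 2) + a (j + 4) = 0) :
    Function.Periodic a 6 := fun j => by
  have h := hrec (j + 2)
  rw [show j + 2 + 2 = j + 4 by ring, show j + 2 + 4 = j + 6 by ring] at h
  linear_combination h - hrec j

end Recurrence

theorem dvd_three_mul_sum_val_of_recurrence {n : ℕ} [NeZero n] {a : ZMod n → ZMod 2}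
    (hrec : ∀ j, a j + a (j + 2) + a (j + 4) = 0) : n ∣ 3 * ∑ j, (a j).val := by
  set w : ZMod n → ℕ := fun j => (a j).val + (a (j + 2)).val + (a (j + 4)).val with hw
  have hw_even : ∀ j, 2 ∣ w j := fun j => by
    have := hrec j
    show 2 ∣ (a j).val + (a (j + 2)).val + (a (j + 4)).val
    generalize a j = x, a (j + 2) = y, a (j + 4) = z at this ⊢
    revert x y z; decide
  have hw_periodic : Function.Periodic w 2 := fun j => by
    simp only [hw, show j + 2 + 2 = j + 4 by ring, show j + 2 + 4 = j + 6 by ring,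
      periodic_six_of_recurrence hrec j]
    ring
  have hpair : ∀ j, w j + w (j + 1) = w 0 + w 1 := fun j => by
    refine (ZMod.eq_apply_zero_of_periodic_one (f := fun j => w j + w (j + 1))
      (fun j => ?_) j).trans (by rw [zero_add])
    simp only [add_assoc, one_add_one_eq_two, hw_periodic j, add_comm (w (j + 1))]
  have hsum : ∑ j, w j = 3 * ∑ j, (a j).val := by
    simp only [hw, sum_add_distrib, Fintype.sum_comp_add_right (fun j => (a j).val)]
    ring
  have key : n * (w 0 + w 1) = 2 * (3 * ∑ j, (a j).val) := by
    calc n * (w 0 + w 1) = ∑ j, (w j + w (j + 1)) := by simp [hpair]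
      _ = _ := by rw [sum_add_distrib, Fintype.sum_comp_add_right w, hsum]; ring
  obtain ⟨c₀, hc₀⟩ := hw_even 0
  obtain ⟨c₁, hc₁⟩ := hw_even 1
  exact ⟨c₀ + c₁, by rw [hc₀, hc₁] at key; linarith⟩

theorem stmt_7 (n : ℕ) (hn : 3 ≤ n) :
    ¬ orientableDistanceMagic
        ((⊤ : SimpleGraph (Fin 2)) □ SimpleGraph.cycleGraph n) (2 * n) := by
  obtain ⟨k, rfl⟩ : ∃ k, n = k + 3 := ⟨n - 3, by omega⟩
  intro h
  obtain ⟨l, hl, hnbr⟩ := h.exists_bijective_neighbor_parity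
  set φ := ZMod.castHom (dvd_mul_right 2 (k + 3)) (ZMod 2)
  set a : ZMod (k + 3) → ZMod 2 := fun j => φ (l (0, j))
  set b : ZMod (k + 3) → ZMod 2 := fun j => φ (l (1, j))
  have row₀ : ∀ j, a (j - 1) + a (j + 1) + b j = 0 := fun j =>
    (add_comm _ _).trans ((prism_sum_neighborFinset _ 0 j).symm.trans (hnbr (0, j)))
  have row₁ : ∀ j, b (j - 1) + b (j + 1) + a j = 0 := fun j =>
    (add_comm _ _).trans ((prism_sum_neighborFinset _ 1 j).symm.trans (hnbr (1, j)))
  have hrec := recurrence_of_prism_rows row₀ row₁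
  have hcount : ∑ j, (a j).val + ∑ j, (b j).val = k + 3 := by
    calc ∑ j, (a j).val + ∑ j, (b j).val = ∑ x, (φ (l x)).val := by
          rw [Fintype.sum_prod_type, Fin.sum_univ_two]; rfl
      _ = ∑ v, (φ v).val := Fintype.sum_bijective l hl _ _ fun _ => rfl
      _ = k + 3 := ZMod.sum_val_castHom_two (k + 3)
  have hba : ∑ j, (b j).val = ∑ j, (a j).val := by
    simp only [eq_shift_three_of_prism_rows row₀ hrec]
    exact Fintype.sum_comp_add_right (fun j => (a j).val) 3
  obtain ⟨c, hc⟩ := dvd_three_mul_sum_val_of_recurrence hrec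
  rcases c with _ | _ | c <;> nlinarith
end
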